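/- arXiv:1702.05722 — 4 statements merged into one kernel-verified Lean document; each statement's English description precedes it below -/
import Mathlib

section
/- Let (𝒳, d) be a compact metric space, ε > 0 and D > 2. Suppose S ⊆ 𝒳 is a (2Dε)-separated set (any two distinct points of S have distance ≥ 2Dε). Let X, Y be 𝒳-valued random variables on a probability space such that X is uniformly distributed over S and E[d(X,Y)] < ε. Then I(X;Y) ≥ (1 - 1/D) log|S| - H(1/D). -/
open MeasureTheory ProbabilityTheory Real Filter Set
open scoped ENNReal NNReal

noncomputable def miPartitionSum {Ω 𝒳 𝒴 : Type*} [MeasureSpace Ω] {M N : ℕ}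
    (X : Ω → 𝒳) (Y : Ω → 𝒴) (f : 𝒳 → Fin M) (g : 𝒴 → Fin N) : ℝ :=
  ∑ m : Fin M, ∑ n : Fin N,
    (ℙ {ω | f (X ω) = m ∧ g (Y ω) = n}).toReal *
      Real.log ((ℙ {ω | f (X ω) = m ∧ g (Y ω) = n}).toReal /
        ((ℙ {ω | f (X ω) = m}).toReal * (ℙ {ω | g (Y ω) = n}).toReal))

/-- The mutual information `I(X;Y)`: the supremum, over finite measurable partitions of the
value spaces (encoded as measurable maps onto `Fin M`, `Fin N`), of the partition sums
`Σ_{m,n} P((X,Y) ∈ P_m × Q_n) log [P((X,Y) ∈ P_m × Q_n) / (P(X ∈ P_m) P(Y ∈ Q_n))]`. -/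
noncomputable def mutualInformation {Ω 𝒳 𝒴 : Type*} [MeasureSpace Ω]
    [MeasurableSpace 𝒳] [MeasurableSpace 𝒴] (X : Ω → 𝒳) (Y : Ω → 𝒴) : ℝ≥0∞ :=
  ⨆ (M : ℕ) (N : ℕ) (f : 𝒳 → Fin M) (g : 𝒴 → Fin N) (_ : Measurable f) (_ : Measurable g),
    ENNReal.ofReal (miPartitionSum X Y f g)

noncomputable def binEnt (p : ℝ) : ℝ := -(p * Real.log p) - (1 - p) * Real.log (1 - p)

/-! Decode a point of `𝒳` to the index of the ball of radius `Dε` around a point of `S` that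
contains it; these balls are disjoint by separation, and by Markov's inequality `X` and `Y`
decode to the same index with probability `a ≥ 1 - 1/D`. Taking this decoder as the partition
of both spaces, the log-sum inequality on the diagonal and off-diagonal blocks of the joint
distribution (Fano's inequality) bounds the partition sum below by `a log |S| - H(a)`, and this
is at least `(1 - 1/D) log |S| - H(1/D)` since `H(a) = H(1 - a)` and `H` increases on `[0, 1/2]`.
-/

lemma mul_log_add_sub_le_mul_log_div {p q c : ℝ} (hp : 0 ≤ p) (hq : 0 ≤ q) (hpq : q = 0 → p = 0)
    (hc : 0 < c) : p * log c + p - c * q ≤ p * log (p / q) := by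
  rcases hp.eq_or_lt with rfl | hp
  · simpa using mul_nonneg hc.le hq
  have hq : 0 < q := hq.lt_of_ne fun h => hp.ne' (hpq h.symm)
  have hlog := Real.one_sub_inv_le_log_of_pos (div_pos hp (mul_pos hc hq))
  rw [inv_div, log_div hp.ne' (mul_pos hc hq).ne', log_mul hc.ne' hq.ne'] at hlog
  have h := mul_le_mul_of_nonneg_left hlog hp.le
  rw [mul_sub, mul_one, mul_div_cancel₀ _ hp.ne'] at h
  rw [log_div hp.ne' hq.ne']
  linarith

open Finset in
theorem sum_mul_log_sum_div_sum_le {ι : Type*} (s : Finset ι) {p q : ι → ℝ}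
    (hp : ∀ i ∈ s, 0 ≤ p i) (hq : ∀ i ∈ s, 0 ≤ q i) (hpq : ∀ i ∈ s, q i = 0 → p i = 0) :
    (∑ i ∈ s, p i) * log ((∑ i ∈ s, p i) / ∑ i ∈ s, q i) ≤ ∑ i ∈ s, p i * log (p i / q i) := by
  rcases (sum_nonneg hp).eq_or_lt with hP | hP
  · rw [← hP, zero_mul]
    refine sum_nonneg fun i hi => ?_
    simp [(sum_eq_zero_iff_of_nonneg hp).1 hP.symm i hi]
  have hQ : 0 < ∑ i ∈ s, q i := (sum_nonneg hq).lt_of_ne fun hQ => hP.ne' <|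
    sum_eq_zero fun i hi => hpq i hi ((sum_eq_zero_iff_of_nonneg hq).1 hQ.symm i hi)
  set c := (∑ i ∈ s, p i) / ∑ i ∈ s, q i
  calc (∑ i ∈ s, p i) * log c = ∑ i ∈ s, (p i * log c + p i - c * q i) := by
        rw [sum_sub_distrib, sum_add_distrib, ← sum_mul, ← mul_sum, div_mul_cancel₀ _ hQ.ne']
        ring
    _ ≤ ∑ i ∈ s, p i * log (p i / q i) := sum_le_sum fun i hi =>
        mul_log_add_sub_le_mul_log_div (hp i hi) (hq i hi) (hpq i hi) (div_pos hP hQ)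

lemma binEnt_eq_binEntropy (p : ℝ) : binEnt p = binEntropy p := by
  simp [binEnt, binEntropy, log_inv]
  ring

lemma mul_log_le_mul_log_div {x c : ℝ} (hx₀ : 0 ≤ x) (hx₁ : x ≤ 1) (hc₀ : 0 ≤ c) (hc₁ : c ≤ 1) :
    x * log x ≤ x * log (x / c) := by
  rcases hx₀.eq_or_lt with rfl | hx
  · simp
  rcases hc₀.eq_or_lt with rfl | hc
  · simpa using mul_log_nonpos hx.le hx₁
  exact mul_le_mul_of_nonneg_left (log_le_log hx (le_div_self hx.le hc hc₁)) hx.le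

lemma mul_log_sub_binEnt_le {a K : ℝ} (ha₀ : 0 ≤ a) (ha₁ : a ≤ 1) (hK : 1 ≤ K) :
    a * log K - binEnt a ≤ a * log (a / K⁻¹) + (1 - a) * log ((1 - a) / (1 - K⁻¹)) := by
  have hfirst : a * log (a / K⁻¹) = a * log a + a * log K := by
    rcases ha₀.eq_or_lt with rfl | ha
    · simp
    rw [div_inv_eq_mul, log_mul ha.ne' (by positivity), mul_add]
  have hsecond := mul_log_le_mul_log_div (x := 1 - a) (c := 1 - K⁻¹) (by linarith) (by linarith)
    (sub_nonneg.2 (inv_le_one_of_one_le₀ hK)) (by simp [inv_nonneg.2 (zero_le_one.trans hK)])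
  rw [binEnt, hfirst]
  linarith

lemma sub_binEnt_le_sub_binEnt {δ a L : ℝ} (hδ₀ : 0 ≤ δ) (hδ : δ ≤ 2⁻¹) (ha : 1 - δ ≤ a)
    (ha₁ : a ≤ 1) (hL : 0 ≤ L) : (1 - δ) * L - binEnt δ ≤ a * L - binEnt a := by
  have hent : binEnt a ≤ binEnt δ := by
    rw [binEnt_eq_binEntropy, binEnt_eq_binEntropy, ← binEntropy_one_sub a]
    exact binEntropy_strictMonoOn.monotoneOn ⟨by linarith, by linarith⟩ ⟨hδ₀, hδ⟩ (by linarith)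
  nlinarith

noncomputable def finiteMutualInfo {ι κ : Type*} [Fintype ι] [Fintype κ] (p : ι → κ → ℝ) : ℝ :=
  ∑ m, ∑ n, p m n * log (p m n / ((∑ n', p m n') * ∑ m', p m' n))

open Finset in
theorem mul_log_card_sub_binEnt_le_finiteMutualInfo {ι : Type*} [Fintype ι] [DecidableEq ι]
    (p : ι → ι → ℝ) (hp : ∀ m n, 0 ≤ p m n) (hrow : ∀ m, ∑ n, p m n = (Fintype.card ι : ℝ)⁻¹) :
    (∑ m, p m m) * log (Fintype.card ι) - binEnt (∑ m, p m m) ≤ finiteMutualInfo p := by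
  rcases isEmpty_or_nonempty ι with hι | hι
  · simp [finiteMutualInfo, binEnt]
  set K : ℝ := (Fintype.card ι : ℝ)
  have hK : 1 ≤ K := Nat.one_le_cast.2 Fintype.card_pos
  set a := ∑ m, p m m
  let r : ι × ι → ℝ := fun z => p z.1 z.2
  -- the product of the two marginals, the first one being uniform
  let q : ι × ι → ℝ := fun z => K⁻¹ * ∑ m', p m' z.2
  have hq_nonneg (z : ι × ι) : 0 ≤ q z :=
    mul_nonneg (by positivity) (sum_nonneg fun m' _ => hp m' z.2)
  have hpq (z : ι × ι) : q z = 0 → r z = 0 := by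
    intro hz
    have hcol : ∑ m', p m' z.2 = 0 := (mul_eq_zero.1 hz).resolve_left (by positivity)
    exact (sum_eq_zero_iff_of_nonneg fun m' _ => hp m' z.2).1 hcol z.1 (mem_univ _)
  have hcol_total : ∑ n, ∑ m', p m' n = 1 := by
    rw [sum_comm]
    simp [hrow, K]
  have hr_total : ∑ z, r z = 1 := by
    rw [← univ_product_univ, sum_product]
    simp [r, hrow, K]
  have hq_total : ∑ z, q z = 1 := by
    rw [← univ_product_univ, sum_product]
    simp [q, ← mul_sum, hcol_total, K]
  have hq_diag : ∑ m, q (m, m) = K⁻¹ := by simp [q, ← mul_sum, hcol_total]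
  have hsplit (F : ι × ι → ℝ) : ∑ z, F z = ∑ m, F (m, m) + ∑ z ∈ Finset.univ.offDiag, F z := by
    rw [← sum_diag, ← sum_union (disjoint_diag_offDiag _), diag_union_offDiag, univ_product_univ]
  have hr_off : ∑ z ∈ Finset.univ.offDiag, r z = 1 - a := by linarith [hsplit r]
  have hq_off : ∑ z ∈ Finset.univ.offDiag, q z = 1 - K⁻¹ := by linarith [hsplit q]
  have ha₁ : a ≤ 1 := by linarith [sum_nonneg fun z (_ : z ∈ Finset.univ.offDiag) => hp z.1 z.2]
  have hmi : finiteMutualInfo p = ∑ z, r z * log (r z / q z) := by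
    simp only [finiteMutualInfo, hrow, ← univ_product_univ, sum_product, r, q]
  have hdiag := sum_mul_log_sum_div_sum_le univ (p := fun m => r (m, m)) (q := fun m => q (m, m))
    (fun _ _ => hp _ _) (fun _ _ => hq_nonneg _) (fun m _ => hpq (m, m))
  have hoff := sum_mul_log_sum_div_sum_le Finset.univ.offDiag (p := r) (q := q)
    (fun _ _ => hp _ _) (fun _ _ => hq_nonneg _) (fun z _ => hpq z)
  rw [hq_diag] at hdiag
  rw [hr_off, hq_off] at hoff
  rw [hmi, hsplit]
  exact (mul_log_sub_binEnt_le (sum_nonneg fun m _ => hp m m) ha₁ hK).trans (add_le_add hdiag hoff)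

lemma measureReal_eq_sum_inter_preimage {Ω κ : Type*} [MeasurableSpace Ω] {μ : Measure Ω}
    [IsFiniteMeasure μ] [Fintype κ] [MeasurableSpace κ] [MeasurableSingletonClass κ]
    {T : Set Ω} (hT : MeasurableSet T) {G : Ω → κ} (hG : Measurable G) :
    μ.real T = ∑ n, μ.real (T ∩ G ⁻¹' {n}) := by
  rw [← measureReal_biUnion_finset (fun n _ n' _ hnn' => ?_)
    (fun n _ => hT.inter (hG (measurableSet_singleton n)))]
  · congr
    ext ω
    simp
  · exact ((disjoint_singleton.2 hnn').preimage G).mono inter_subset_right inter_subset_right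

lemma miPartitionSum_eq_finiteMutualInfo {Ω 𝒳 𝒴 : Type*} [MeasureSpace Ω]
    [IsFiniteMeasure (ℙ : Measure Ω)] [MeasurableSpace 𝒳] [MeasurableSpace 𝒴] {M N : ℕ}
    {X : Ω → 𝒳} {Y : Ω → 𝒴} {f : 𝒳 → Fin M} {g : 𝒴 → Fin N} (hX : Measurable X)
    (hY : Measurable Y) (hf : Measurable f) (hg : Measurable g) :
    miPartitionSum X Y f g =
      finiteMutualInfo fun m n => (ℙ : Measure Ω).real {ω | f (X ω) = m ∧ g (Y ω) = n} := by
  have hfX := hf.comp hX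
  have hgY := hg.comp hY
  have hrow (m : Fin M) : (ℙ {ω | f (X ω) = m}).toReal =
      ∑ n, (ℙ : Measure Ω).real {ω | f (X ω) = m ∧ g (Y ω) = n} :=
    measureReal_eq_sum_inter_preimage (hfX (measurableSet_singleton m)) hgY
  have hcol (n : Fin N) : (ℙ {ω | g (Y ω) = n}).toReal =
      ∑ m, (ℙ : Measure Ω).real {ω | f (X ω) = m ∧ g (Y ω) = n} := by
    rw [← measureReal_def, measureReal_eq_sum_inter_preimage (T := {ω | g (Y ω) = n})
      (hgY (measurableSet_singleton n)) hfX]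
    simp_rw [inter_comm]
    rfl
  simp only [miPartitionSum, finiteMutualInfo, hrow, hcol, measureReal_def]

lemma mul_log_sub_binEnt_le_miPartitionSum {Ω 𝒳 : Type*} [MeasureSpace Ω]
    [IsFiniteMeasure (ℙ : Measure Ω)] [MeasurableSpace 𝒳] {K : ℕ} {X Y : Ω → 𝒳} {f : 𝒳 → Fin K}
    (hX : Measurable X) (hY : Measurable Y) (hf : Measurable f)
    (hunif : ∀ m, (ℙ : Measure Ω).real {ω | f (X ω) = m} = (K : ℝ)⁻¹) :
    (ℙ : Measure Ω).real {ω | f (X ω) = f (Y ω)} * log K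
      - binEnt ((ℙ : Measure Ω).real {ω | f (X ω) = f (Y ω)}) ≤ miPartitionSum X Y f f := by
  have hrow (m : Fin K) :
      ∑ n, (ℙ : Measure Ω).real {ω | f (X ω) = m ∧ f (Y ω) = n} = (Fintype.card (Fin K) : ℝ)⁻¹ := by
    rw [Fintype.card_fin, ← hunif m]
    exact (measureReal_eq_sum_inter_preimage (T := {ω | f (X ω) = m})
      (hf.comp hX (measurableSet_singleton m)) (hf.comp hY)).symm
  have hdiag : (ℙ : Measure Ω).real {ω | f (X ω) = f (Y ω)} =
      ∑ m, (ℙ : Measure Ω).real {ω | f (X ω) = m ∧ f (Y ω) = m} := by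
    rw [measureReal_eq_sum_inter_preimage (T := {ω | f (X ω) = f (Y ω)})
      (measurableSet_eq_fun (hf.comp hX) (hf.comp hY)) (hf.comp hX)]
    congr! 2 with m
    ext ω
    exact ⟨fun h => ⟨h.2, h.1.symm.trans h.2⟩, fun h => ⟨h.1.trans h.2.symm, h.1⟩⟩
  rw [miPartitionSum_eq_finiteMutualInfo hX hY hf hf, hdiag]
  simpa using mul_log_card_sub_binEnt_le_finiteMutualInfo _ (fun _ _ => measureReal_nonneg) hrow

open Classical in
noncomputable def cellIndex {α ι : Type*} (U : ι → Set α) (i₀ : ι) (y : α) : ι :=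
  if h : ∃ i, y ∈ U i then h.choose else i₀

section cellIndex

open Function

variable {α ι : Type*} {U : ι → Set α}

lemma cellIndex_eq_of_mem (hU : Pairwise (Disjoint on U)) (i₀ : ι) {y : α} {i : ι}
    (hy : y ∈ U i) : cellIndex U i₀ y = i := by
  have h : ∃ i, y ∈ U i := ⟨i, hy⟩
  rw [cellIndex, dif_pos h]
  by_contra hne
  exact disjoint_left.1 (hU hne) h.choose_spec hy

lemma measurable_cellIndex [MeasurableSpace α] [MeasurableSpace ι] [Countable ι]
    (hU : Pairwise (Disjoint on U)) (hUm : ∀ i, MeasurableSet (U i)) (i₀ : ι) :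
    Measurable (cellIndex U i₀) := by
  refine measurable_to_countable' fun i => ?_
  have hfiber : cellIndex U i₀ ⁻¹' {i} = U i ∪ ({_y | i₀ = i} ∩ (⋃ j, U j)ᶜ) := by
    ext y
    constructor
    · rintro rfl
      by_cases h : ∃ j, y ∈ U j
      · obtain ⟨j, hj⟩ := h
        left
        rwa [cellIndex_eq_of_mem hU i₀ hj]
      · right
        exact ⟨by simp [cellIndex, h], by simpa using h⟩
    · rintro (hi | ⟨rfl, hnot⟩)
      · exact cellIndex_eq_of_mem hU i₀ hi
      · simp_all [cellIndex]
  rw [hfiber]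
  exact (hUm i).union ((MeasurableSet.const _).inter (MeasurableSet.iUnion hUm).compl)

end cellIndex

open Function in
lemma exists_decoder_of_separated {𝒳 : Type*} [MetricSpace 𝒳] [MeasurableSpace 𝒳] [BorelSpace 𝒳]
    {S : Finset 𝒳} (hS : S.Nonempty) {r : ℝ}
    (hsep : ∀ x ∈ S, ∀ y ∈ S, x ≠ y → 2 * r ≤ dist x y) :
    ∃ (e : Fin S.card → 𝒳) (f : 𝒳 → Fin S.card), Measurable f ∧ range e = S ∧
      ∀ m y, dist y (e m) < r → f y = m := by
  let e : Fin S.card → 𝒳 := fun m => S.equivFin.symm m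
  have he : Injective e := Subtype.val_injective.comp S.equivFin.symm.injective
  have hU : Pairwise (Disjoint on fun m => Metric.ball (e m) r) := fun m n hmn =>
    Metric.ball_disjoint_ball <| by
      linarith [hsep _ (S.equivFin.symm m).2 _ (S.equivFin.symm n).2 (he.ne hmn)]
  refine ⟨e, cellIndex _ ⟨0, Finset.card_pos.2 hS⟩,
    measurable_cellIndex hU (fun _ => Metric.isOpen_ball.measurableSet) _, ?_,
    fun m y hy => cellIndex_eq_of_mem hU _ hy⟩
  ext x
  exact ⟨by rintro ⟨m, rfl⟩; exact (S.equivFin.symm m).2,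
    fun hx => ⟨S.equivFin ⟨x, hx⟩, by simp [e]⟩⟩

lemma ae_mem_of_measure_preimage_singleton {Ω α : Type*} [MeasurableSpace Ω] [MeasurableSpace α]
    [MeasurableSingletonClass α] {μ : Measure Ω} [IsProbabilityMeasure μ] {X : Ω → α}
    (hX : Measurable X) {S : Finset α} (hS : S.Nonempty)
    (hunif : ∀ x ∈ S, μ (X ⁻¹' {x}) = (S.card : ℝ≥0∞)⁻¹) : ∀ᵐ ω ∂μ, X ω ∈ S := by
  rw [ae_iff]
  change μ (X ⁻¹' S)ᶜ = 0
  rw [prob_compl_eq_zero_iff (hX S.measurableSet),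
    ← sum_measure_preimage_singleton S fun y _ => hX (measurableSet_singleton y),
    Finset.sum_congr rfl hunif, Finset.sum_const, nsmul_eq_mul, ENNReal.mul_inv_cancel
      (Nat.cast_ne_zero.2 (Finset.card_pos.2 hS).ne') (ENNReal.natCast_ne_top _)]

open Function in
lemma measure_setOf_comp_eq {Ω α ι : Type*} [MeasurableSpace Ω] {μ : Measure Ω} {X : Ω → α}
    {f : α → ι} {e : ι → α} (hfe : LeftInverse f e) (hX : ∀ᵐ ω ∂μ, X ω ∈ range e) (m : ι) :
    μ {ω | f (X ω) = m} = μ (X ⁻¹' {e m}) := by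
  refine measure_congr (eventuallyEq_set.2 ?_)
  filter_upwards [hX] with ω ⟨n, hn⟩
  change f (X ω) = m ↔ X ω = e m
  rw [← hn, hfe n, hfe.injective.eq_iff]

lemma integrable_dist_of_compactSpace {Ω 𝒳 : Type*} [MeasurableSpace Ω] {μ : Measure Ω}
    [IsFiniteMeasure μ] [MetricSpace 𝒳] [CompactSpace 𝒳] [MeasurableSpace 𝒳] [BorelSpace 𝒳]
    {X Y : Ω → 𝒳} (hX : Measurable X) (hY : Measurable Y) :
    Integrable (fun ω => dist (X ω) (Y ω)) μ :=
  Integrable.of_bound (hX.dist hY).aestronglyMeasurable (Metric.diam (univ : Set 𝒳)) <|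
    ae_of_all _ fun _ => by
      rw [Real.norm_of_nonneg dist_nonneg]
      exact Metric.dist_le_diam_of_mem isCompact_univ.isBounded (mem_univ _) (mem_univ _)

lemma one_sub_div_le_measureReal_eq_of_integral_dist_le {Ω 𝒳 ι : Type*} [MeasurableSpace Ω]
    {μ : Measure Ω} [IsProbabilityMeasure μ] [MetricSpace 𝒳] [CompactSpace 𝒳] [MeasurableSpace 𝒳] [BorelSpace 𝒳]
    [MeasurableSpace ι] [MeasurableEq ι] {X Y : Ω → 𝒳} {f : 𝒳 → ι} {e : ι → 𝒳} {r ε : ℝ}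
    (hX : Measurable X) (hY : Measurable Y) (hf : Measurable f) (hXe : ∀ᵐ ω ∂μ, X ω ∈ range e)
    (hdec : ∀ m y, dist y (e m) < r → f y = m) (hr : 0 < r)
    (hdist : ∫ ω, dist (X ω) (Y ω) ∂μ ≤ ε) :
    1 - ε / r ≤ μ.real {ω | f (X ω) = f (Y ω)} := by
  have herr : μ {ω | f (X ω) = f (Y ω)}ᶜ ≤ μ {ω | r ≤ dist (X ω) (Y ω)} := by
    refine measure_mono_ae ?_
    filter_upwards [hXe] with ω ⟨m, hm⟩ hne
    by_contra hfar
    have hclose : dist (X ω) (Y ω) < r := not_le.1 hfar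
    have hXm : f (X ω) = m := hdec m _ (by rw [← hm, dist_self]; exact dist_nonneg.trans_lt hclose)
    exact hne (hXm.trans (hdec m _ (by rwa [hm, dist_comm])).symm)
  have hmarkov := mul_meas_ge_le_integral_of_nonneg (ae_of_all μ fun ω => dist_nonneg)
    (integrable_dist_of_compactSpace hX hY) r
  have hfar : μ.real {ω | r ≤ dist (X ω) (Y ω)} ≤ ε / r := by
    rw [le_div_iff₀ hr]
    linarith
  have hcompl : μ.real {ω | f (X ω) = f (Y ω)}ᶜ = 1 - μ.real {ω | f (X ω) = f (Y ω)} :=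
    probReal_compl_eq_one_sub (measurableSet_eq_fun (hf.comp hX) (hf.comp hY))
  have hmono : μ.real {ω | f (X ω) = f (Y ω)}ᶜ ≤ μ.real {ω | r ≤ dist (X ω) (Y ω)} :=
    ENNReal.toReal_mono (measure_ne_top _ _) herr
  linarith

lemma ofReal_miPartitionSum_le_mutualInformation {Ω 𝒳 𝒴 : Type*} [MeasureSpace Ω]
    [MeasurableSpace 𝒳] [MeasurableSpace 𝒴] {M N : ℕ} {X : Ω → 𝒳} {Y : Ω → 𝒴} {f : 𝒳 → Fin M}
    {g : 𝒴 → Fin N} (hf : Measurable f) (hg : Measurable g) :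
    ENNReal.ofReal (miPartitionSum X Y f g) ≤ mutualInformation X Y :=
  le_iSup_of_le M <| le_iSup_of_le N <| le_iSup_of_le f <| le_iSup_of_le g <|
    le_iSup_of_le hf <| le_iSup_of_le hg le_rfl

/-- If `S` is a `2Dε`-separated subset of a compact metric space, `X` is uniformly
distributed over `S` and `E[d(X,Y)] < ε`, then `I(X;Y) ≥ (1 - 1/D) log|S| - H(1/D)`. -/
theorem mutualInformation_ge_of_uniform_on_separated
    {𝒳 : Type*} [MetricSpace 𝒳] [CompactSpace 𝒳] [MeasurableSpace 𝒳] [BorelSpace 𝒳]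
    {Ω : Type*} [MeasureSpace Ω] [IsProbabilityMeasure (ℙ : Measure Ω)]
    (ε D : ℝ) (hε : 0 < ε) (hD : 2 < D)
    (S : Finset 𝒳) (hS : S.Nonempty)
    (hsep : ∀ x ∈ S, ∀ y ∈ S, x ≠ y → 2 * D * ε ≤ dist x y)
    (X Y : Ω → 𝒳) (hX : Measurable X) (hY : Measurable Y)
    (hunif : ∀ x ∈ S, ℙ (X ⁻¹' {x}) = (S.card : ℝ≥0∞)⁻¹)
    (hdist : ∫ ω, dist (X ω) (Y ω) ∂ℙ < ε) :
    ENNReal.ofReal ((1 - 1 / D) * Real.log S.card - binEnt (1 / D))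
      ≤ mutualInformation X Y := by
  have hr : 0 < D * ε := mul_pos (by linarith) hε
  obtain ⟨e, f, hf, he, hdec⟩ := exists_decoder_of_separated hS (r := D * ε)
    fun x hx y hy hxy => by linarith [hsep x hx y hy hxy]
  have hfe : Function.LeftInverse f e := fun m => hdec m (e m) (by rwa [dist_self])
  have hXe : ∀ᵐ ω, X ω ∈ range e := he ▸ ae_mem_of_measure_preimage_singleton hX hS hunif
  have hf_unif (m : Fin S.card) : (ℙ : Measure Ω).real {ω | f (X ω) = m} = (S.card : ℝ)⁻¹ := by
    rw [measureReal_def, measure_setOf_comp_eq hfe hXe,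
      hunif _ (Finset.mem_coe.1 (he ▸ mem_range_self m))]
    simp
  have hdiag : 1 - 1 / D ≤ (ℙ : Measure Ω).real {ω | f (X ω) = f (Y ω)} := by
    simpa [div_mul_cancel_right₀ hε.ne'] using
      one_sub_div_le_measureReal_eq_of_integral_dist_le hX hY hf hXe hdec hr hdist.le
  calc ENNReal.ofReal ((1 - 1 / D) * Real.log S.card - binEnt (1 / D))
      ≤ ENNReal.ofReal (miPartitionSum X Y f f) := ENNReal.ofReal_le_ofReal <|
        (sub_binEnt_le_sub_binEnt (by positivity) (by rw [one_div]; exact inv_anti₀ two_pos hD.le)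
          hdiag measureReal_le_one (log_natCast_nonneg _)).trans
        (mul_log_sub_binEnt_le_miPartitionSum hX hY hf hf_unif)
    _ ≤ mutualInformation X Y := ofReal_miPartitionSum_le_mutualInformation hf hf
end

section
/- The compact metric space ([0,1]^ℤ, d) with d(x,y) = Σ_{m∈ℤ} 2^{-|m|}|x_m - y_m| has tame growth of covering numbers: for every δ > 0, lim_{ε→0} ε^δ · log #([0,1]^ℤ, d, ε) = 0. In fact log #([0,1]^ℤ, d, ε) = O(|log ε|²). -/
open MeasureTheory Real Filter Set Topology
open scoped ENNReal NNReal

/-- Minimal cardinality of a cover of `𝒳` by open sets of `ρ`-diameter less than `ε`. -/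
noncomputable def coverNum (𝒳 : Type*) [TopologicalSpace 𝒳] (ρ : 𝒳 → 𝒳 → ℝ) (ε : ℝ) : ℕ :=
  sInf {N : ℕ | ∃ U : Fin N → Set 𝒳, (∀ i, IsOpen (U i)) ∧ (∀ x, ∃ i, x ∈ U i) ∧
    ∀ i, ∀ x ∈ U i, ∀ y ∈ U i, ρ x y < ε}

/-- The infinite-dimensional cube `[0,1]^ℤ`. -/
abbrev Cube : Type := ℤ → Set.Icc (0 : ℝ) 1

/-- The metric `d(x,y) = Σ_{m ∈ ℤ} 2^{-|m|} |x_m - y_m|` on `[0,1]^ℤ`. -/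
noncomputable def dCube (x y : Cube) : ℝ :=
  ∑' m : ℤ, (2 : ℝ) ^ (-|m|) * |(x m : ℝ) - (y m : ℝ)|

/-!
Cover the cube by the open cells of a grid of mesh `2⁻ⁿ` in the `2n + 1` coordinates `|m| ≤ n`,
leaving the remaining coordinates free. On a cell the central coordinates differ by less than
`2¹⁻ⁿ` against total weight at most `3`, and the free coordinates carry weight `2 · 2⁻ⁿ`, so the
cells have diameter at most `8 · 2⁻ⁿ`. Taking `2ⁿ ≍ 1 / ε` gives
`log #(ε) ≤ (2n + 1) log (2ⁿ + 1) = O(log² ε)`, and `ε ^ δ log² ε → 0`.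
-/

lemma hasSum_two_zpow_neg_abs : HasSum (fun m : ℤ => (2 : ℝ) ^ (-|m|)) 3 := by
  have hnat : HasSum (fun n : ℕ => (2 : ℝ) ^ (-|(n : ℤ)|)) 2 := by
    simpa [zpow_neg, inv_pow] using hasSum_geometric_two
  have hneg : HasSum (fun n : ℕ => (2 : ℝ) ^ (-|-((n : ℤ) + 1)|)) 1 := by
    have hw : (fun n : ℕ => (2 : ℝ) ^ (-|-((n : ℤ) + 1)|)) = fun n => 1 / 2 * (1 / 2) ^ n := by
      ext n
      rw [abs_neg, abs_of_nonneg (by positivity), zpow_neg, ← Nat.cast_succ, zpow_natCast,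
        pow_succ', mul_inv, one_div, inv_pow]
    have h := hasSum_geometric_two.mul_left (1 / 2 : ℝ)
    rwa [← hw, one_div_mul_cancel two_ne_zero] at h
  have h := HasSum.of_nat_of_neg_add_one (f := fun m : ℤ => (2 : ℝ) ^ (-|m|)) hnat hneg
  rwa [show (2 : ℝ) + 1 = 3 by norm_num] at h

lemma sum_Icc_two_zpow_neg_abs (n : ℕ) :
    ∑ m ∈ Finset.Icc (-(n : ℤ)) n, (2 : ℝ) ^ (-|m|) = 3 - 2 / 2 ^ n := by
  induction n with
  | zero => norm_num
  | succ n ih =>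
    have hIcc : Finset.Icc (-((n + 1 : ℕ) : ℤ)) (n + 1 : ℕ) =
        insert (-((n : ℤ) + 1)) (insert ((n : ℤ) + 1) (Finset.Icc (-(n : ℤ)) n)) := by
      ext m; simp only [Finset.mem_Icc, Finset.mem_insert]; omega
    rw [hIcc, Finset.sum_insert (by simp only [Finset.mem_insert, Finset.mem_Icc]; omega),
      Finset.sum_insert (by simp), ih, abs_neg, abs_of_nonneg (by positivity), zpow_neg,
      ← Nat.cast_succ, zpow_natCast, pow_succ]
    field_simp
    ring

lemma tsum_compl_Icc_two_zpow_neg_abs (n : ℕ) :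
    ∑' m : ↥((Finset.Icc (-(n : ℤ)) n : Set ℤ)ᶜ), (2 : ℝ) ^ (-|(m : ℤ)|) = 2 / 2 ^ n := by
  have h := hasSum_two_zpow_neg_abs.summable.sum_add_tsum_compl (s := Finset.Icc (-(n : ℤ)) n)
  rw [hasSum_two_zpow_neg_abs.tsum_eq, sum_Icc_two_zpow_neg_abs] at h
  linarith

lemma dCube_le_of_abs_sub_le {x y : Cube} {n : ℕ} {η : ℝ}
    (h : ∀ m ∈ Finset.Icc (-(n : ℤ)) n, |(x m : ℝ) - y m| ≤ η) :
    dCube x y ≤ 3 * η + 2 / 2 ^ n := by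
  set s := Finset.Icc (-(n : ℤ)) n
  have hη : 0 ≤ η := (abs_nonneg _).trans (h 0 (by simp [s]))
  have hterm (m : ℤ) : (2 : ℝ) ^ (-|m|) * |(x m : ℝ) - y m| ≤ (2 : ℝ) ^ (-|m|) :=
    mul_le_of_le_one_right (by positivity)
      (abs_sub_le_of_nonneg_of_le (x m).2.1 (x m).2.2 (y m).2.1 (y m).2.2)
  have hsum : Summable fun m : ℤ => (2 : ℝ) ^ (-|m|) * |(x m : ℝ) - y m| :=
    hasSum_two_zpow_neg_abs.summable.of_nonneg_of_le (fun _ => by positivity) hterm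
  calc dCube x y
      = ∑ m ∈ s, (2 : ℝ) ^ (-|m|) * |(x m : ℝ) - y m|
        + ∑' m : ↥((s : Set ℤ)ᶜ), (2 : ℝ) ^ (-|(m : ℤ)|) * |(x m : ℝ) - y m| :=
        hsum.sum_add_tsum_compl.symm
    _ ≤ ∑ m ∈ s, (2 : ℝ) ^ (-|m|) * η + ∑' m : ↥((s : Set ℤ)ᶜ), (2 : ℝ) ^ (-|(m : ℤ)|) := by
        gcongr with m hm
        · exact h m hm
        · exact hsum.subtype _
        · exact hasSum_two_zpow_neg_abs.summable.subtype _
        · exact hterm _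
    _ = (3 - 2 / 2 ^ n) * η + 2 / 2 ^ n := by
        rw [← Finset.sum_mul, sum_Icc_two_zpow_neg_abs, tsum_compl_Icc_two_zpow_neg_abs]
    _ ≤ 3 * η + 2 / 2 ^ n := by gcongr; linarith [show (0 : ℝ) ≤ 2 / 2 ^ n by positivity]

lemma coverNum_le_card {𝒳 ι : Type*} [TopologicalSpace 𝒳] [Fintype ι] {ρ : 𝒳 → 𝒳 → ℝ}
    {ε : ℝ} (U : ι → Set 𝒳) (hU : ∀ i, IsOpen (U i)) (hcover : ∀ x, ∃ i, x ∈ U i)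
    (hdiam : ∀ i, ∀ x ∈ U i, ∀ y ∈ U i, ρ x y < ε) :
    coverNum 𝒳 ρ ε ≤ Fintype.card ι := by
  let e := Fintype.equivFin ι
  refine Nat.sInf_le ⟨fun j => U (e.symm j), fun j => hU _, fun x => ?_, fun j => hdiam _⟩
  obtain ⟨i, hi⟩ := hcover x
  exact ⟨e i, by simpa using hi⟩

/-- Open cells rather than a partition, because `coverNum` counts open covers; the coordinates
with `|m| > n` are unconstrained. -/
def cubeCell (n : ℕ) (j : Finset.Icc (-(n : ℤ)) n → Fin (2 ^ n + 1)) : Set Cube :=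
  {x | ∀ m : Finset.Icc (-(n : ℤ)) n, |2 ^ n * (x m : ℝ) - (j m : ℕ)| < 1}

lemma isOpen_cubeCell (n : ℕ) (j : Finset.Icc (-(n : ℤ)) n → Fin (2 ^ n + 1)) :
    IsOpen (cubeCell n j) := by
  simp only [cubeCell, Set.ofPred_forall]
  exact isOpen_iInter_of_finite fun m => isOpen_lt (by fun_prop) continuous_const

lemma exists_mem_cubeCell (n : ℕ) (x : Cube) : ∃ j, x ∈ cubeCell n j := by
  refine ⟨fun m => ⟨⌊2 ^ n * (x m : ℝ)⌋₊, ?_⟩, fun m => ?_⟩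
  · refine Nat.lt_succ_of_le (Nat.floor_le_of_le ?_)
    exact_mod_cast mul_le_of_le_one_right (by positivity) (x m).2.2
  · have h0 : 0 ≤ 2 ^ n * (x m : ℝ) := mul_nonneg (by positivity) (x m).2.1
    rw [abs_lt]
    constructor <;> linarith [Nat.floor_le h0, Nat.lt_floor_add_one (2 ^ n * (x m : ℝ))]

lemma dCube_lt_of_mem_cubeCell {n : ℕ} {ε : ℝ} (hε : 8 < ε * 2 ^ n)
    {j : Finset.Icc (-(n : ℤ)) n → Fin (2 ^ n + 1)} {x y : Cube}
    (hx : x ∈ cubeCell n j) (hy : y ∈ cubeCell n j) : dCube x y < ε := by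
  have hclose : ∀ m ∈ Finset.Icc (-(n : ℤ)) n, |(x m : ℝ) - y m| ≤ 2 / 2 ^ n := by
    intro m hm
    have hx' := abs_lt.mp (hx ⟨m, hm⟩)
    have hy' := abs_lt.mp (hy ⟨m, hm⟩)
    rw [le_div_iff₀' (by positivity), ← abs_of_pos (by positivity : (0 : ℝ) < 2 ^ n), ← abs_mul,
      mul_sub, abs_sub_le_iff]
    constructor <;> linarith
  calc dCube x y ≤ 3 * (2 / 2 ^ n) + 2 / 2 ^ n := dCube_le_of_abs_sub_le hclose
    _ = 8 / 2 ^ n := by ring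
    _ < ε := by rwa [div_lt_iff₀ (by positivity)]

lemma coverNum_cube_le {n : ℕ} {ε : ℝ} (hε : 8 < ε * 2 ^ n) :
    coverNum Cube dCube ε ≤ (2 ^ n + 1) ^ (2 * n + 1) := by
  calc coverNum Cube dCube ε ≤ Fintype.card (Finset.Icc (-(n : ℤ)) n → Fin (2 ^ n + 1)) :=
        coverNum_le_card (cubeCell n) (isOpen_cubeCell n) (exists_mem_cubeCell n)
          fun _ _ hx _ hy => dCube_lt_of_mem_cubeCell hε hx hy
    _ = (2 ^ n + 1) ^ (2 * n + 1) := by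
        rw [Fintype.card_fun, Fintype.card_fin, Fintype.card_coe, Int.card_Icc]
        congr 1; omega

lemma log_coverNum_cube_le {n : ℕ} {ε : ℝ} (hε : 8 < ε * 2 ^ n) :
    Real.log (coverNum Cube dCube ε) ≤ (n + 1) * (2 * n + 1) * Real.log 2 := by
  have hN : (coverNum Cube dCube ε : ℝ) ≤ 2 ^ ((n + 1) * (2 * n + 1)) := by
    calc (coverNum Cube dCube ε : ℝ) ≤ (2 ^ n + 1) ^ (2 * n + 1) := by
          exact_mod_cast coverNum_cube_le hε
      _ ≤ (2 ^ (n + 1)) ^ (2 * n + 1) := by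
          gcongr
          rw [pow_succ]
          linarith [one_le_pow₀ (one_le_two : (1 : ℝ) ≤ 2) (n := n)]
      _ = 2 ^ ((n + 1) * (2 * n + 1)) := (pow_mul _ _ _).symm
  rcases (Nat.cast_nonneg (α := ℝ) (coverNum Cube dCube ε)).eq_or_lt with hzero | hpos
  · rw [← hzero, Real.log_zero]
    positivity
  · calc Real.log (coverNum Cube dCube ε) ≤ Real.log (2 ^ ((n + 1) * (2 * n + 1))) :=
          Real.log_le_log hpos hN
      _ = (n + 1) * (2 * n + 1) * Real.log 2 := by
          rw [Real.log_pow]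
          push_cast
          ring

lemma log_coverNum_cube_le_sq_log {ε : ℝ} (hε0 : 0 < ε) (hε : ε < 1 / 16) :
    Real.log (coverNum Cube dCube ε) ≤ 36 * Real.log ε ^ 2 := by
  -- `n = p + 4` gives `8 < ε * 2 ^ n` while `n ≤ 2 * p ≤ 2 * |log ε| / log 2`.
  obtain ⟨p, hp, hp'⟩ := exists_nat_pow_near (one_le_one_div hε0 (by linarith)) one_lt_two
  have hp4 : 4 ≤ p := by
    have h16 : (16 : ℝ) < 1 / ε := by rw [lt_one_div (by norm_num) hε0]; exact hε
    have : (2 : ℝ) ^ 4 < 2 ^ (p + 1) := by linarith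
    have := (pow_lt_pow_iff_right₀ one_lt_two).mp this
    omega
  have hε8 : 8 < ε * 2 ^ (p + 4) := by
    have := (div_lt_iff₀ hε0).mp hp'
    calc (8 : ℝ) < 8 * (2 ^ (p + 1) * ε) := by linarith
      _ = ε * 2 ^ (p + 4) := by ring
  have hpL : p * Real.log 2 ≤ -Real.log ε := by
    rw [← Real.log_pow, ← Real.log_inv, ← one_div]
    exact Real.log_le_log (by positivity) hp
  have hlog2 : (2 : ℝ) / 3 < Real.log 2 := by linarith [Real.log_two_gt_d9]
  have hp4R : (4 : ℝ) ≤ p := by exact_mod_cast hp4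
  calc Real.log (coverNum Cube dCube ε) ≤ (p + 4 + 1) * (2 * (p + 4) + 1) * Real.log 2 := by
        exact_mod_cast log_coverNum_cube_le hε8
    _ ≤ 24 * p ^ 2 * Real.log 2 :=
        mul_le_mul_of_nonneg_right (by nlinarith) (Real.log_nonneg one_le_two)
    _ ≤ 36 * (p * Real.log 2) ^ 2 := by nlinarith
    _ ≤ 36 * Real.log ε ^ 2 := by
        rw [← neg_sq (Real.log ε)]
        gcongr

lemma tendsto_rpow_mul_log_sq_nhdsGT_zero {δ : ℝ} (hδ : 0 < δ) :
    Tendsto (fun x : ℝ => x ^ δ * Real.log x ^ 2) (𝓝[>] 0) (𝓝 0) := by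
  have h := (tendsto_log_mul_rpow_nhdsGT_zero (half_pos hδ)).pow 2
  rw [zero_pow two_ne_zero] at h
  refine h.congr' (eventually_mem_nhdsWithin.mono fun x hx => ?_)
  rw [mul_pow, ← Real.rpow_mul_natCast hx.out.le, Nat.cast_ofNat, div_mul_cancel₀ _ two_ne_zero,
    mul_comm]

/-- `([0,1]^ℤ, d)` has tame growth of covering numbers; in fact
`log #([0,1]^ℤ, d, ε) = O(|log ε|²)`. -/
theorem cube_tame_growth :
    (∀ δ : ℝ, 0 < δ →
      Tendsto (fun ε : ℝ => ε ^ δ * Real.log (coverNum Cube dCube ε))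
        (𝓝[>] (0 : ℝ)) (𝓝 0)) ∧
    ∃ C > (0 : ℝ), ∃ ε₀ > (0 : ℝ), ∀ ε : ℝ, 0 < ε → ε < ε₀ →
      Real.log (coverNum Cube dCube ε) ≤ C * (Real.log ε) ^ 2 := by
  refine ⟨fun δ hδ => ?_, 36, by norm_num, 1 / 16, by norm_num,
    fun ε hε0 hε => log_coverNum_cube_le_sq_log hε0 hε⟩
  have hsmall : Ioo (0 : ℝ) (1 / 16) ∈ 𝓝[>] (0 : ℝ) := Ioo_mem_nhdsGT (by norm_num)
  refine squeeze_zero' (g := fun ε => 36 * (ε ^ δ * Real.log ε ^ 2)) ?_ ?_ ?_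
  · filter_upwards [hsmall] with ε hε
    exact mul_nonneg (rpow_nonneg hε.1.le δ) (Real.log_natCast_nonneg _)
  · filter_upwards [hsmall] with ε hε
    calc ε ^ δ * Real.log (coverNum Cube dCube ε) ≤ ε ^ δ * (36 * Real.log ε ^ 2) :=
          mul_le_mul_of_nonneg_left (log_coverNum_cube_le_sq_log hε.1 hε.2) (rpow_nonneg hε.1.le δ)
      _ = 36 * (ε ^ δ * Real.log ε ^ 2) := by ring
  · simpa using (tendsto_rpow_mul_log_sq_nhdsGT_zero hδ).const_mul 36
end

section
/- Let (𝒳, T, d) be a dynamical system with compact metric space 𝒳. For every ε > 0 and every T-invariant Borel probability measure μ on 𝒳, the rate distortion function satisfies R_μ(ε) ≤ S̃(𝒳,T,d,ε) ≤ S(𝒳,T,d,ε), where S̃(𝒳,T,d,ε) = lim_{n→∞} (1/n) log #(𝒳, d̄_n, ε) and S(𝒳,T,d,ε) = lim_{n→∞} (1/n) log #(𝒳, d_n, ε). -/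
open MeasureTheory ProbabilityTheory Real Filter Set Topology
open scoped ENNReal NNReal

/-- `d_n(x,y) = max_{0 ≤ k < n} d(T^k x, T^k y)`. -/
noncomputable def bowenMax {𝒳 : Type*} [PseudoMetricSpace 𝒳] (T : 𝒳 → 𝒳) (n : ℕ)
    (x y : 𝒳) : ℝ :=
  (((Finset.range n).sup fun k => nndist (T^[k] x) (T^[k] y)) : ℝ≥0)

/-- `d̄_n(x,y) = (1/n) Σ_{k=0}^{n-1} d(T^k x, T^k y)`. -/
noncomputable def bowenAvg {𝒳 : Type*} [PseudoMetricSpace 𝒳] (T : 𝒳 → 𝒳) (n : ℕ)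
    (x y : 𝒳) : ℝ :=
  (∑ k ∈ Finset.range n, dist (T^[k] x) (T^[k] y)) / n

/-- The rate distortion function `R_μ(ε)`: the infimum of `I(X;Y)/n` over `n ≥ 1` and
random variables `X` (with law `μ`) and `Y = (Y_0, …, Y_{n-1})` on some probability
space satisfying `E[(1/n) Σ_k d(T^k X, Y_k)] < ε`. -/
noncomputable def rateDistortion (𝒳 : Type*) [MetricSpace 𝒳] [MeasurableSpace 𝒳]
    (T : 𝒳 → 𝒳) (μ : Measure 𝒳) (ε : ℝ) : ℝ≥0∞ :=
  sInf {r : ℝ≥0∞ | ∃ (n : ℕ), 0 < n ∧ ∃ (Ω : Type) (_ : MeasureSpace Ω),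
    IsProbabilityMeasure (ℙ : Measure Ω) ∧ ∃ (X : Ω → 𝒳) (Y : Ω → Fin n → 𝒳),
      Measurable X ∧ Measurable Y ∧ Measure.map X ℙ = μ ∧
      (∫ ω, (∑ k : Fin n, dist (T^[(k : ℕ)] (X ω)) (Y ω k)) / n ∂ℙ) < ε ∧
      r = mutualInformation X Y / n}

/-!
A finite open cover of `𝒳` by sets of `d̄_n`-diameter `< ε` gives a code for orbit segments:
send `x` to the first cover element containing it and reproduce the orbit segment of a fixed
point of that element. The distortion is then `< ε` pointwise, and the reproduction takes at most
`#(𝒳, d̄_n, ε)` values, so its mutual information with `x` is at most the entropy of a variable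
with that many values, i.e. at most `log #(𝒳, d̄_n, ε)`. Dividing by `n` and letting `n → ∞`
gives `R_μ(ε) ≤ S̃`; `S̃ ≤ S` because `d̄_n ≤ d_n`.
-/

lemma sum_negMulLog_le_log_card {ι : Type*} {s : Finset ι} {q : ι → ℝ}
    (hq : ∀ i ∈ s, 0 ≤ q i) (hsum : ∑ i ∈ s, q i = 1) :
    ∑ i ∈ s, negMulLog (q i) ≤ log s.card := by
  have hN : (0 : ℝ) < s.card := by
    exact_mod_cast (Finset.nonempty_of_sum_ne_zero (hsum ▸ one_ne_zero)).card_pos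
  -- `negMulLog (N * q) ≤ 1 - N * q`, expanded by `negMulLog_mul` and divided by `N = #s`
  have hterm : ∀ i ∈ s, negMulLog (q i) ≤ (s.card : ℝ)⁻¹ - q i + q i * log s.card := by
    intro i hi
    have h := negMulLog_le_one_sub_self (mul_nonneg hN.le (hq i hi))
    rw [negMulLog_mul, negMulLog] at h
    refine le_of_mul_le_mul_left ?_ hN
    rw [mul_add, mul_sub, mul_inv_cancel₀ hN.ne']
    linarith
  calc ∑ i ∈ s, negMulLog (q i)
      ≤ ∑ i ∈ s, ((s.card : ℝ)⁻¹ - q i + q i * log s.card) := Finset.sum_le_sum hterm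
    _ = log s.card := by
      rw [Finset.sum_add_distrib, Finset.sum_sub_distrib, ← Finset.sum_mul, hsum,
        Finset.sum_const, nsmul_eq_mul, mul_inv_cancel₀ hN.ne']
      ring

lemma mul_log_div_mul_le_mul_neg_log {p pm q : ℝ} (hp : 0 ≤ p) (hpm : p ≤ pm) (hq : p ≤ q) :
    p * log (p / (pm * q)) ≤ p * -log q := by
  rcases hp.eq_or_lt with rfl | hp
  · simp
  have hpm' : 0 < pm := hp.trans_le hpm
  have hq' : 0 < q := hp.trans_le hq
  refine mul_le_mul_of_nonneg_left ?_ hp.le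
  rw [log_div hp.ne' (by positivity), log_mul hpm'.ne' hq'.ne']
  linarith [log_le_log hp hpm]

lemma sum_measureReal_preimage_singleton_inter {Ω β : Type*} [MeasurableSpace Ω]
    {μ : Measure Ω} [IsFiniteMeasure μ] [Fintype β] [MeasurableSpace β]
    [MeasurableSingletonClass β] {φ : Ω → β} (hφ : Measurable φ) (B : Set Ω) :
    ∑ b, μ.real (φ ⁻¹' {b} ∩ B) = μ.real B := by
  simp_rw [← measureReal_restrict_apply (hφ (measurableSet_singleton _))]
  rw [sum_measureReal_preimage_singleton _ fun b _ => hφ (measurableSet_singleton b)]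
  simp

section MutualInformation

variable {Ω 𝒳 𝒴 : Type*} [MeasureSpace Ω] [IsProbabilityMeasure (ℙ : Measure Ω)]
  [MeasurableSpace 𝒳] [MeasurableSpace 𝒴] {X : Ω → 𝒳} {Y : Ω → 𝒴} {N : ℕ} {v : Fin N → 𝒴}

lemma miPartitionSum_le_log (hX : Measurable X) (hY : Measurable Y)
    (hYv : ∀ ω, Y ω ∈ range v) {M N' : ℕ} {f : 𝒳 → Fin M} {g : 𝒴 → Fin N'}
    (hf : Measurable f) (hg : Measurable g) :
    miPartitionSum X Y f g ≤ log N := by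
  classical
  set q : Fin N' → ℝ := fun j => (ℙ : Measure Ω).real ((g ∘ Y) ⁻¹' {j})
  set I := Finset.univ.image (g ∘ v)
  have hfiber : ∀ j, ∑ m, (ℙ : Measure Ω).real ((f ∘ X) ⁻¹' {m} ∩ (g ∘ Y) ⁻¹' {j}) = q j := fun j =>
    sum_measureReal_preimage_singleton_inter (hf.comp hX) _
  have hq_zero : ∀ j ∉ I, q j = 0 := by
    intro j hj
    suffices (g ∘ Y) ⁻¹' {j} = ∅ by simp [q, this]
    refine eq_empty_of_forall_notMem fun ω hω => hj ?_
    obtain ⟨i, hi⟩ := hYv ω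
    exact Finset.mem_image.mpr ⟨i, Finset.mem_univ i, by simpa [hi] using hω⟩
  have hq_sum : ∑ j ∈ I, q j = 1 := by
    rw [Finset.sum_subset (Finset.subset_univ I) fun j _ => hq_zero j]
    simpa using sum_measureReal_preimage_singleton_inter (μ := ℙ) (hg.comp hY) univ
  have hI : 0 < I.card := (Finset.nonempty_of_sum_ne_zero (hq_sum ▸ one_ne_zero)).card_pos
  calc miPartitionSum X Y f g
      ≤ ∑ m, ∑ j, (ℙ : Measure Ω).real ((f ∘ X) ⁻¹' {m} ∩ (g ∘ Y) ⁻¹' {j}) * -log (q j) :=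
        Finset.sum_le_sum fun m _ => Finset.sum_le_sum fun j _ =>
          mul_log_div_mul_le_mul_neg_log measureReal_nonneg
            (measureReal_mono inter_subset_left) (measureReal_mono inter_subset_right)
    _ = ∑ j ∈ I, negMulLog (q j) := by
      rw [Finset.sum_comm, Finset.sum_subset (Finset.subset_univ I) fun j _ hj => by
        simp [hq_zero j hj]]
      simp_rw [← Finset.sum_mul, hfiber, negMulLog, neg_mul, mul_neg]
    _ ≤ log I.card := sum_negMulLog_le_log_card (fun _ _ => measureReal_nonneg) hq_sum
    _ ≤ log N := log_le_log (by exact_mod_cast hI)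
        (by exact_mod_cast Finset.card_image_le.trans (Finset.card_fin N).le)

lemma mutualInformation_le_log (hX : Measurable X) (hY : Measurable Y)
    (hYv : ∀ ω, Y ω ∈ range v) :
    mutualInformation X Y ≤ ENNReal.ofReal (log N) :=
  iSup_le fun _ => iSup_le fun _ => iSup_le fun _ => iSup_le fun _ =>
    iSup_le fun hf => iSup_le fun hg =>
      ENNReal.ofReal_le_ofReal (miPartitionSum_le_log hX hY hYv hf hg)

end MutualInformation

section BowenMetrics

variable {𝒳 : Type*} [PseudoMetricSpace 𝒳] (T : 𝒳 → 𝒳) (n : ℕ)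

lemma bowenAvg_self (x : 𝒳) : bowenAvg T n x x = 0 := by
  simp [bowenAvg]

lemma bowenMax_self (x : 𝒳) : bowenMax T n x x = 0 := by
  simp [bowenMax]

lemma bowenAvg_triangle_left (x y z : 𝒳) :
    bowenAvg T n x y ≤ bowenAvg T n z x + bowenAvg T n z y := by
  rw [bowenAvg, bowenAvg, bowenAvg, ← add_div, ← Finset.sum_add_distrib]
  gcongr with k
  exact dist_triangle_left _ _ _

lemma bowenMax_triangle_left (x y z : 𝒳) :
    bowenMax T n x y ≤ bowenMax T n z x + bowenMax T n z y := by
  rw [bowenMax, bowenMax, bowenMax, ← NNReal.coe_add, NNReal.coe_le_coe]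
  exact Finset.sup_le fun k hk => (nndist_triangle_left _ _ _).trans
    (add_le_add (Finset.le_sup (f := fun k => nndist (T^[k] z) (T^[k] x)) hk)
      (Finset.le_sup (f := fun k => nndist (T^[k] z) (T^[k] y)) hk))

lemma bowenAvg_le_bowenMax (x y : 𝒳) : bowenAvg T n x y ≤ bowenMax T n x y := by
  rcases n.eq_zero_or_pos with rfl | hn
  · simp [bowenAvg, bowenMax]
  rw [bowenAvg, div_le_iff₀ (by exact_mod_cast hn)]
  calc ∑ k ∈ Finset.range n, dist (T^[k] x) (T^[k] y)
      ≤ ∑ _k ∈ Finset.range n, bowenMax T n x y := Finset.sum_le_sum fun k hk => by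
        rw [bowenMax, dist_nndist, NNReal.coe_le_coe]
        exact Finset.le_sup (f := fun k => nndist (T^[k] x) (T^[k] y)) hk
    _ = bowenMax T n x y * n := by simp [mul_comm]

variable {T}

lemma continuous_bowenAvg (hT : Continuous T) : Continuous (Function.uncurry (bowenAvg T n)) :=
  (continuous_finsetSum _ fun k _ =>
    ((hT.iterate k).comp continuous_fst).dist ((hT.iterate k).comp continuous_snd)).div_const _

lemma continuous_bowenMax (hT : Continuous T) : Continuous (Function.uncurry (bowenMax T n)) :=
  NNReal.continuous_coe.comp (Continuous.finset_sup_apply fun k _ =>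
    ((hT.iterate k).comp continuous_fst).nndist ((hT.iterate k).comp continuous_snd))

end BowenMetrics

def IsOpenCoverDiamLT {𝒳 : Type*} [TopologicalSpace 𝒳] (ρ : 𝒳 → 𝒳 → ℝ) (ε : ℝ) {N : ℕ}
    (U : Fin N → Set 𝒳) : Prop :=
  (∀ i, IsOpen (U i)) ∧ (∀ x, ∃ i, x ∈ U i) ∧ ∀ i, ∀ x ∈ U i, ∀ y ∈ U i, ρ x y < ε

section Covers

variable {𝒳 : Type*} [TopologicalSpace 𝒳] {ρ ρ' : 𝒳 → 𝒳 → ℝ} {ε : ℝ} {N : ℕ}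

lemma IsOpenCoverDiamLT.mono {U : Fin N → Set 𝒳} (hU : IsOpenCoverDiamLT ρ' ε U)
    (h : ∀ x y, ρ x y ≤ ρ' x y) : IsOpenCoverDiamLT ρ ε U :=
  ⟨hU.1, hU.2.1, fun i x hx y hy => (h x y).trans_lt (hU.2.2 i x hx y hy)⟩

lemma IsOpenCoverDiamLT.pos [Nonempty 𝒳] {U : Fin N → Set 𝒳} (hU : IsOpenCoverDiamLT ρ ε U) :
    0 < N :=
  (hU.2.1 (Classical.arbitrary 𝒳)).choose.pos

lemma coverNum_le {U : Fin N → Set 𝒳} (hU : IsOpenCoverDiamLT ρ ε U) : coverNum 𝒳 ρ ε ≤ N :=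
  Nat.sInf_le ⟨U, hU⟩

lemma exists_isOpenCoverDiamLT_coverNum [CompactSpace 𝒳] (hε : 0 < ε)
    (hρ : Continuous (Function.uncurry ρ)) (hself : ∀ x, ρ x x = 0)
    (htri : ∀ x y z, ρ x y ≤ ρ z x + ρ z y) :
    ∃ U : Fin (coverNum 𝒳 ρ ε) → Set 𝒳, IsOpenCoverDiamLT ρ ε U := by
  have hball : ∀ x, IsOpen {y | ρ x y < ε / 2} := fun x =>
    isOpen_lt (hρ.comp (continuous_const.prodMk continuous_id)) continuous_const
  obtain ⟨t, ht⟩ := isCompact_univ.elim_finite_subcover _ hball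
    fun x _ => mem_iUnion.mpr ⟨x, by simp [hself x, hε]⟩
  refine Nat.sInf_mem (s := {N | ∃ U : Fin N → Set 𝒳, IsOpenCoverDiamLT ρ ε U})
    ⟨t.card, fun i => {y | ρ (t.equivFin.symm i) y < ε / 2}, fun i => hball _, fun x => ?_,
      fun i x hx y hy => ?_⟩
  · obtain ⟨c, hc, hx⟩ := mem_iUnion₂.mp (ht (mem_univ x))
    exact ⟨t.equivFin ⟨c, hc⟩, by simpa using hx⟩
  · linarith [htri x y (t.equivFin.symm i), hx.out, hy.out]

end Covers

section BowenCovers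

variable {𝒳 : Type*} [MetricSpace 𝒳] [CompactSpace 𝒳] {T : 𝒳 → 𝒳} {ε : ℝ}

lemma exists_isOpenCoverDiamLT_bowenAvg (hT : Continuous T) (hε : 0 < ε) (n : ℕ) :
    ∃ U : Fin (coverNum 𝒳 (bowenAvg T n) ε) → Set 𝒳, IsOpenCoverDiamLT (bowenAvg T n) ε U :=
  exists_isOpenCoverDiamLT_coverNum hε (continuous_bowenAvg n hT) (bowenAvg_self T n)
    (bowenAvg_triangle_left T n)

lemma coverNum_bowenAvg_le_coverNum_bowenMax (hT : Continuous T) (hε : 0 < ε) (n : ℕ) :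
    coverNum 𝒳 (bowenAvg T n) ε ≤ coverNum 𝒳 (bowenMax T n) ε :=
  let ⟨_, hU⟩ := exists_isOpenCoverDiamLT_coverNum hε (continuous_bowenMax n hT)
    (bowenMax_self T n) (bowenMax_triangle_left T n)
  coverNum_le (hU.mono (bowenAvg_le_bowenMax T n))

end BowenCovers

lemma exists_measurable_mem_of_forall_exists_mem {α ι : Type*} [MeasurableSpace α] [Fintype ι]
    [LinearOrder ι] [MeasurableSpace ι] [MeasurableSingletonClass ι] {U : ι → Set α}
    (hU : ∀ i, MeasurableSet (U i)) (hcov : ∀ x, ∃ i, x ∈ U i) :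
    ∃ q : α → ι, Measurable q ∧ ∀ x, x ∈ U (q x) := by
  classical
  have hne : ∀ x, (Finset.univ.filter (x ∈ U ·)).Nonempty := fun x =>
    let ⟨i, hi⟩ := hcov x; ⟨i, by simpa using hi⟩
  set q : α → ι := fun x => (Finset.univ.filter (x ∈ U ·)).min' (hne x)
  have hleast : ∀ x, IsLeast {i | x ∈ U i} (q x) := fun x => by
    simpa using Finset.isLeast_min' _ (hne x)
  refine ⟨q, measurable_to_countable' fun i => ?_, fun x => (hleast x).1⟩
  have hfiber : q ⁻¹' {i} = U i ∩ ⋂ j, (U j)ᶜ ∪ {_x | i ≤ j} := by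
    ext x
    simp only [mem_preimage, mem_singleton_iff, mem_inter_iff, mem_iInter, mem_union,
      mem_compl_iff, mem_ofPred_eq, ← imp_iff_not_or]
    exact ⟨fun h => h ▸ hleast x, fun h => (hleast x).unique h⟩
  rw [hfiber]
  exact (hU i).inter (.iInter fun j => (hU j).compl.union (.const _))

lemma integral_lt_of_forall_lt {α : Type*} [MeasurableSpace α] {μ : Measure α}
    [IsProbabilityMeasure μ] {f : α → ℝ} (hf : Integrable f μ) {c : ℝ} (h : ∀ x, f x < c) :
    ∫ x, f x ∂μ < c := by
  have hpos : 0 < ∫ x, (c - f x) ∂μ := by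
    rw [integral_pos_iff_support_of_nonneg (fun x => (sub_pos.2 (h x)).le)
      ((integrable_const c).sub hf)]
    simp [Function.support, (sub_pos.2 (h _)).ne']
  rw [integral_sub (integrable_const c) hf] at hpos
  simpa [sub_pos] using hpos

-- Sample spaces in `rateDistortion` live in `Type`, which is why `μ` is realized on `ℝ`.
lemma exists_measure_real_map_eq {α : Type*} [MeasurableSpace α] [StandardBorelSpace α]
    (μ : Measure α) [IsProbabilityMeasure μ] :
    ∃ (P : Measure ℝ) (X : ℝ → α), IsProbabilityMeasure P ∧ Measurable X ∧ P.map X = μ ∧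
      ∀ F : α → ℝ, ∫ ω, F (X ω) ∂P = ∫ x, F x ∂μ := by
  have := nonempty_of_isProbabilityMeasure μ
  obtain ⟨e, he⟩ := exists_measurableEmbedding_real α
  obtain ⟨X, hX, hXe⟩ := he.exists_measurable_extend measurable_id fun _ => inferInstance
  refine ⟨μ.map e, X, Measure.isProbabilityMeasure_map he.measurable.aemeasurable, hX, ?_,
    fun F => ?_⟩
  · rw [Measure.map_map hX he.measurable, hXe, Measure.map_id]
  · rw [he.integral_map]
    simp only [← Function.comp_apply (f := X), hXe, id]

section RateDistortion

variable {𝒳 : Type*} [MetricSpace 𝒳] [MeasurableSpace 𝒳] {T : 𝒳 → 𝒳}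
  (μ : Measure 𝒳) [IsProbabilityMeasure μ] {ε : ℝ} {n : ℕ}

lemma rateDistortion_le_of_code [StandardBorelSpace 𝒳] (hn : 0 < n) {N : ℕ} {q : 𝒳 → Fin N}
    (hq : Measurable q) (v : Fin N → Fin n → 𝒳)
    (hdist : ∫ x, (∑ k : Fin n, dist (T^[(k : ℕ)] x) (v (q x) k)) / n ∂μ < ε) :
    rateDistortion 𝒳 T μ ε ≤ ENNReal.ofReal (log N / n) := by
  obtain ⟨P, X, hP, hX, hXμ, hXint⟩ := exists_measure_real_map_eq μ
  let : MeasureSpace ℝ := ⟨P⟩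
  have hY : Measurable (v ∘ q ∘ X) := Measurable.of_discrete.comp (hq.comp hX)
  calc rateDistortion 𝒳 T μ ε ≤ mutualInformation X (v ∘ q ∘ X) / n :=
        sInf_le ⟨n, hn, ℝ, _, hP, X, _, hX, hY, hXμ, (hXint _).trans_lt hdist, rfl⟩
    _ ≤ ENNReal.ofReal (log N) / n := by
        gcongr
        exact mutualInformation_le_log hX hY fun ω => mem_range_self _
    _ = ENNReal.ofReal (log N / n) := by
        rw [ENNReal.ofReal_div_of_pos (by exact_mod_cast hn), ENNReal.ofReal_natCast]

lemma rateDistortion_le_log_coverNum_bowenAvg_div [CompactSpace 𝒳] [BorelSpace 𝒳]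
    (hT : Continuous T) (hε : 0 < ε) (hn : 0 < n) :
    rateDistortion 𝒳 T μ ε ≤ ENNReal.ofReal (log (coverNum 𝒳 (bowenAvg T n) ε) / n) := by
  have := nonempty_of_isProbabilityMeasure μ
  obtain ⟨U, hopen, hcov, hdiam⟩ := exists_isOpenCoverDiamLT_bowenAvg hT hε n
  obtain ⟨q, hq, hqU⟩ :=
    exists_measurable_mem_of_forall_exists_mem (fun i => (hopen i).measurableSet) hcov
  have hcenter : ∀ i, ∃ c, ∀ x ∈ U i, bowenAvg T n x c < ε := fun i => by
    rcases (U i).eq_empty_or_nonempty with hU | ⟨c, hc⟩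
    · exact ⟨Classical.arbitrary 𝒳, by simp [hU]⟩
    · exact ⟨c, fun x hx => hdiam i x hx c hc⟩
  choose c hc using hcenter
  refine rateDistortion_le_of_code μ hn hq (fun i k => T^[(k : ℕ)] (c i)) ?_
  have hD : ∀ x, (∑ k : Fin n, dist (T^[(k : ℕ)] x) (T^[(k : ℕ)] (c (q x)))) / n =
      bowenAvg T n x (c (q x)) := fun x => by
    rw [bowenAvg, Fin.sum_univ_eq_sum_range (fun k => dist (T^[k] x) (T^[k] (c (q x))))]
  simp only [hD]
  have hmeas : Measurable fun x => bowenAvg T n x (c (q x)) :=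
    (continuous_bowenAvg n hT).measurable2 measurable_id (Measurable.of_discrete.comp hq)
  refine integral_lt_of_forall_lt (.of_bound hmeas.aestronglyMeasurable ε
    (.of_forall fun x => ?_)) fun x => hc _ x (hqU x)
  rw [Real.norm_of_nonneg (by rw [bowenAvg]; positivity)]
  exact (hc _ x (hqU x)).le

end RateDistortion

theorem rateDistortion_le_S_general {𝒳 : Type*} [MetricSpace 𝒳] [CompactSpace 𝒳]
    [MeasurableSpace 𝒳] [BorelSpace 𝒳] (T : 𝒳 → 𝒳) (hT : Continuous T)
    (μ : Measure 𝒳) [IsProbabilityMeasure μ]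
    (ε : ℝ) (hε : 0 < ε) (Stil S : ℝ)
    (hStil : Tendsto (fun n : ℕ => Real.log (coverNum 𝒳 (bowenAvg T n) ε) / n)
      atTop (𝓝 Stil))
    (hS : Tendsto (fun n : ℕ => Real.log (coverNum 𝒳 (bowenMax T n) ε) / n)
      atTop (𝓝 S)) :
    rateDistortion 𝒳 T μ ε ≤ ENNReal.ofReal Stil ∧ Stil ≤ S := by
  have := nonempty_of_isProbabilityMeasure μ
  refine ⟨ge_of_tendsto ((ENNReal.continuous_ofReal.tendsto Stil).comp hStil) ?_,
    le_of_tendsto_of_tendsto' hStil hS fun n => ?_⟩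
  · filter_upwards [eventually_gt_atTop 0] with n hn
    exact rateDistortion_le_log_coverNum_bowenAvg_div μ hT hε hn
  · obtain ⟨_, hU⟩ := exists_isOpenCoverDiamLT_bowenAvg hT hε n
    gcongr
    · exact_mod_cast hU.pos
    · exact coverNum_bowenAvg_le_coverNum_bowenMax hT hε n

/-- `R_μ(ε) ≤ S̃(𝒳,T,d,ε) ≤ S(𝒳,T,d,ε)` where
`S̃ = lim (1/n) log #(𝒳, d̄_n, ε)` and `S = lim (1/n) log #(𝒳, d_n, ε)`. -/
theorem rateDistortion_le_S {𝒳 : Type*} [MetricSpace 𝒳] [CompactSpace 𝒳]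
    [MeasurableSpace 𝒳] [BorelSpace 𝒳] (T : 𝒳 → 𝒳) (hT : Continuous T)
    (μ : Measure 𝒳) [IsProbabilityMeasure μ] (hinv : Measure.map T μ = μ)
    (ε : ℝ) (hε : 0 < ε) (Stil S : ℝ)
    (hStil : Tendsto (fun n : ℕ => Real.log (coverNum 𝒳 (bowenAvg T n) ε) / n)
      atTop (𝓝 Stil))
    (hS : Tendsto (fun n : ℕ => Real.log (coverNum 𝒳 (bowenMax T n) ε) / n)
      atTop (𝓝 S)) :
    rateDistortion 𝒳 T μ ε ≤ ENNReal.ofReal Stil ∧ Stil ≤ S :=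
  rateDistortion_le_S_general T hT μ ε hε Stil S hStil hS
end

section
/- Let (𝒳, T, d) be a dynamical system with compact metric space 𝒳. For every ε > 0 and every T-invariant Borel probability measure μ, the L^∞-rate distortion function satisfies R̃_μ(ε) ≤ S(𝒳,T,d,ε) = lim_{n→∞} (1/n) log #(𝒳, d_n, ε). -/
open MeasureTheory ProbabilityTheory Real Filter Set Topology
open scoped ENNReal NNReal

/-- The `L^∞`-rate distortion function `R̃_μ(ε, α)`: the infimum of `I(X;Y)/n` over `n ≥ 1`
and random variables `X` (with law `μ`) and `Y = (Y_0, …, Y_{n-1})` on some probability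
space with `E[#{k : d(T^k X, Y_k) ≥ ε}] < αn`. -/
noncomputable def rateDistortionLinfty (𝒳 : Type*) [MetricSpace 𝒳] [MeasurableSpace 𝒳]
    (T : 𝒳 → 𝒳) (μ : Measure 𝒳) (ε α : ℝ) : ℝ≥0∞ :=
  sInf {r : ℝ≥0∞ | ∃ (n : ℕ), 0 < n ∧ ∃ (Ω : Type) (_ : MeasureSpace Ω),
    IsProbabilityMeasure (ℙ : Measure Ω) ∧ ∃ (X : Ω → 𝒳) (Y : Ω → Fin n → 𝒳),
      Measurable X ∧ Measurable Y ∧ Measure.map X ℙ = μ ∧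
      (∫ ω, ((Finset.univ.filter fun k : Fin n =>
          ε ≤ dist (T^[(k : ℕ)] (X ω)) (Y ω k)).card : ℝ) ∂ℙ) < α * n ∧
      r = mutualInformation X Y / n}

/-- `R̃_μ(ε) = lim_{α → 0} R̃_μ(ε, α)`; since `R̃_μ(ε, α)` is nonincreasing in `α`, the
limit equals the supremum over `α > 0`. -/
noncomputable def rateDistortionLinftyLim (𝒳 : Type*) [MetricSpace 𝒳] [MeasurableSpace 𝒳]
    (T : 𝒳 → 𝒳) (μ : Measure 𝒳) (ε : ℝ) : ℝ≥0∞ :=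
  ⨆ (α : ℝ) (_ : 0 < α), rateDistortionLinfty 𝒳 T μ ε α


lemma mi_sum_le_log {Ω : Type} [MeasureSpace Ω] [IsProbabilityMeasure (ℙ : Measure Ω)]
    {M N' : ℕ} {A : Ω → Fin M} {B : Ω → Fin N'} (hA : Measurable A) (hB : Measurable B)
    {N : ℕ} (hN : 1 ≤ N) (s : Finset (Fin N')) (hs : ∀ ω, B ω ∈ s) (hsN : s.card ≤ N) :
    (∑ m : Fin M, ∑ j : Fin N',
      (ℙ {ω | A ω = m ∧ B ω = j}).toReal *
        Real.log ((ℙ {ω | A ω = m ∧ B ω = j}).toReal /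
          ((ℙ {ω | A ω = m}).toReal * (ℙ {ω | B ω = j}).toReal))) ≤ Real.log N := by
  classical
  set p : Fin M → Fin N' → ℝ := fun m j => (ℙ {ω | A ω = m ∧ B ω = j}).toReal with hp
  set a : Fin M → ℝ := fun m => (ℙ {ω | A ω = m}).toReal with ha
  set b : Fin N' → ℝ := fun j => (ℙ {ω | B ω = j}).toReal with hb
  have hp0 : ∀ m j, 0 ≤ p m j := fun m j => ENNReal.toReal_nonneg
  have hb0 : ∀ j, 0 ≤ b j := fun j => ENNReal.toReal_nonneg
  have hmeasA : ∀ m, MeasurableSet {ω | A ω = m} := fun m => hA (measurableSet_singleton m)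
  have hmeasB : ∀ j, MeasurableSet {ω | B ω = j} := fun j => hB (measurableSet_singleton j)
  have hmeasAB : ∀ m j, MeasurableSet {ω | A ω = m ∧ B ω = j} := fun m j =>
    (hmeasA m).inter (hmeasB j)
  have hpa : ∀ m j, p m j ≤ a m := fun m j =>
    ENNReal.toReal_mono (measure_ne_top _ _) (measure_mono fun ω h => h.1)
  have hpb : ∀ m j, p m j ≤ b j := fun m j =>
    ENNReal.toReal_mono (measure_ne_top _ _) (measure_mono fun ω h => h.2)
  -- marginal: sum over m of p m j = b j
  have hbp : ∀ j, ∑ m, p m j = b j := by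
    intro j
    have hU : {ω | B ω = j} = ⋃ m, {ω | A ω = m ∧ B ω = j} := by
      ext ω; simp
    have hdisj : Pairwise (Function.onFun Disjoint fun m => {ω | A ω = m ∧ B ω = j}) := by
      intro m m' hmm'
      rw [Function.onFun, Set.disjoint_left]
      rintro ω ⟨h1, -⟩ ⟨h2, -⟩
      exact hmm' (h1 ▸ h2 ▸ rfl)
    have := measure_iUnion (μ := (ℙ : Measure Ω)) hdisj (fun m => hmeasAB m j)
    rw [← hU, tsum_fintype] at this
    rw [hb]
    simp only [this, hp]
    rw [ENNReal.toReal_sum (fun m _ => measure_ne_top _ _)]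
  have hbsum : ∑ j, b j = 1 := by
    have hU : (⋃ j, {ω | B ω = j}) = Set.univ := by
      ext ω; simp
    have hdisj : Pairwise (Function.onFun Disjoint fun j => {ω | B ω = j}) := by
      intro j j' hjj'
      rw [Function.onFun, Set.disjoint_left]
      rintro ω h1 h2
      exact hjj' (h1 ▸ h2 ▸ rfl)
    have := measure_iUnion (μ := (ℙ : Measure Ω)) hdisj hmeasB
    rw [hU, measure_univ, tsum_fintype] at this
    rw [hb]
    have h2 := congrArg ENNReal.toReal this
    rw [ENNReal.toReal_sum (fun j _ => measure_ne_top _ _)] at h2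
    simpa using h2.symm
  -- step 1: termwise bound
  have step1 : ∀ m j, p m j * Real.log (p m j / (a m * b j)) ≤ -(p m j * Real.log (b j)) := by
    intro m j
    rcases eq_or_lt_of_le (hp0 m j) with h | h
    · simp [← h]
    · have ha' : 0 < a m := lt_of_lt_of_le h (hpa m j)
      have hb' : 0 < b j := lt_of_lt_of_le h (hpb m j)
      have hlogeq : Real.log (p m j / (a m * b j))
          = Real.log (p m j / a m) - Real.log (b j) := by
        rw [Real.log_div h.ne' (by positivity), Real.log_div h.ne' ha'.ne',
          Real.log_mul ha'.ne' hb'.ne']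
        ring
      rw [hlogeq]
      have hlog : Real.log (p m j / a m) ≤ 0 :=
        Real.log_nonpos (by positivity) ((div_le_one ha').2 (hpa m j))
      nlinarith [mul_nonneg h.le (neg_nonneg.2 hlog)]
  have step1' : (∑ m : Fin M, ∑ j : Fin N',
      p m j * Real.log (p m j / (a m * b j))) ≤ ∑ j, -(b j * Real.log (b j)) := by
    calc (∑ m : Fin M, ∑ j : Fin N', p m j * Real.log (p m j / (a m * b j)))
        ≤ ∑ m : Fin M, ∑ j : Fin N', -(p m j * Real.log (b j)) := by
          apply Finset.sum_le_sum; intro m _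
          exact Finset.sum_le_sum fun j _ => step1 m j
      _ = ∑ j : Fin N', ∑ m : Fin M, -(p m j * Real.log (b j)) := Finset.sum_comm
      _ = ∑ j, -(b j * Real.log (b j)) := by
          apply Finset.sum_congr rfl
          intro j _
          rw [Finset.sum_neg_distrib, ← Finset.sum_mul, hbp j]
  -- step 2: entropy bound
  have step2 : (∑ j, -(b j * Real.log (b j))) ≤ Real.log N := by
    set t : Finset (Fin N') := Finset.univ.filter (fun j => b j ≠ 0) with ht
    have htsub : t ⊆ s := by
      intro j hj
      rw [ht, Finset.mem_filter] at hj
      have hne : {ω | B ω = j}.Nonempty := by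
        by_contra hcon
        rw [Set.not_nonempty_iff_eq_empty] at hcon
        exact hj.2 (by simp [hb, hcon])
      obtain ⟨ω, hω⟩ := hne
      exact hω ▸ hs ω
    have hsum_t : (∑ j, -(b j * Real.log (b j))) = ∑ j ∈ t, -(b j * Real.log (b j)) := by
      rw [eq_comm]
      apply Finset.sum_subset (Finset.subset_univ t)
      intro j _ hj
      rw [ht, Finset.mem_filter] at hj
      push_neg at hj
      simp [hj (Finset.mem_univ j)]
    have hbt : (∑ j ∈ t, b j) = 1 := by
      rw [← hbsum]
      apply Finset.sum_subset (Finset.subset_univ t)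
      intro j _ hj
      rw [ht, Finset.mem_filter] at hj
      push_neg at hj
      simp [hj (Finset.mem_univ j)]
    have hN0 : (0:ℝ) < N := by
      have : 0 < N := hN
      exact_mod_cast this
    have hterm : ∀ j ∈ t, -(b j * Real.log (b j)) ≤ 1/(N:ℝ) - b j + b j * Real.log N := by
      intro j hj
      rw [ht, Finset.mem_filter] at hj
      have hbj : 0 < b j := (hb0 j).lt_of_ne (Ne.symm hj.2)
      have h1 : Real.log (1/(b j * N)) ≤ 1/(b j * N) - 1 :=
        Real.log_le_sub_one_of_pos (by positivity)
      have h2 : Real.log (1/(b j * N)) = -(Real.log (b j) + Real.log N) := by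
        rw [one_div, Real.log_inv, Real.log_mul hbj.ne' hN0.ne']
      have h3 := mul_le_mul_of_nonneg_left h1 hbj.le
      rw [h2] at h3
      have h4 : b j * (1/(b j * N) - 1) = 1/(N:ℝ) - b j := by field_simp
      have h5 : b j * (-(Real.log (b j) + Real.log N))
          = -(b j * Real.log (b j)) - b j * Real.log N := by ring
      linarith [h3]
    calc (∑ j, -(b j * Real.log (b j))) = ∑ j ∈ t, -(b j * Real.log (b j)) := hsum_t
      _ ≤ ∑ j ∈ t, (1/(N:ℝ) - b j + b j * Real.log N) := Finset.sum_le_sum hterm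
      _ = t.card * (1/(N:ℝ)) - 1 + Real.log N := by
          rw [Finset.sum_add_distrib, Finset.sum_sub_distrib, ← Finset.sum_mul, hbt,
            Finset.sum_const, nsmul_eq_mul, one_mul]
      _ ≤ 1 - 1 + Real.log N := by
          have hc : (t.card:ℝ) ≤ N := by exact_mod_cast (Finset.card_le_card htsub).trans hsN
          have h6 : (t.card:ℝ) * (1/N) ≤ 1 := by
            rw [mul_one_div]
            exact (div_le_one hN0).2 hc
          linarith
      _ = Real.log N := by ring
  calc (∑ m : Fin M, ∑ j : Fin N',
      p m j * Real.log (p m j / (a m * b j))) ≤ ∑ j, -(b j * Real.log (b j)) := step1'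
    _ ≤ Real.log N := step2

lemma dist_le_bowenMax {𝒳 : Type*} [PseudoMetricSpace 𝒳] (T : 𝒳 → 𝒳) {n k : ℕ}
    (hk : k < n) (x y : 𝒳) : dist (T^[k] x) (T^[k] y) ≤ bowenMax T n x y := by
  rw [dist_nndist, bowenMax]
  exact NNReal.coe_le_coe.2 (Finset.le_sup (f := fun k => nndist (T^[k] x) (T^[k] y)) (Finset.mem_range.2 hk))

lemma bowenMax_lt_of_forall {𝒳 : Type*} [PseudoMetricSpace 𝒳] (T : 𝒳 → 𝒳) {n : ℕ} {ε : ℝ}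
    (hε : 0 < ε) {x y : 𝒳} (h : ∀ k < n, dist (T^[k] x) (T^[k] y) < ε) :
    bowenMax T n x y < ε := by
  rw [bowenMax]
  have hsup : ((Finset.range n).sup fun k => nndist (T^[k] x) (T^[k] y)) < ε.toNNReal := by
    rw [Finset.sup_lt_iff (show (⊥ : ℝ≥0) < ε.toNNReal from by
      simpa using Real.toNNReal_pos.2 hε)]
    intro k hk
    rw [Real.lt_toNNReal_iff_coe_lt, coe_nndist]
    exact h k (Finset.mem_range.1 hk)
  calc ((((Finset.range n).sup fun k => nndist (T^[k] x) (T^[k] y)) : ℝ≥0) : ℝ)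
      < (ε.toNNReal : ℝ) := NNReal.coe_lt_coe.2 hsup
    _ = ε := Real.coe_toNNReal _ hε.le

lemma coverNum_spec {𝒳 : Type*} [MetricSpace 𝒳] [CompactSpace 𝒳] (T : 𝒳 → 𝒳)
    (hT : Continuous T) (n : ℕ) {ε : ℝ} (hε : 0 < ε) :
    ∃ U : Fin (coverNum 𝒳 (bowenMax T n) ε) → Set 𝒳, (∀ i, IsOpen (U i)) ∧
      (∀ x, ∃ i, x ∈ U i) ∧
      ∀ i, ∀ x ∈ U i, ∀ y ∈ U i, bowenMax T n x y < ε := by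
  have hne : {N : ℕ | ∃ U : Fin N → Set 𝒳, (∀ i, IsOpen (U i)) ∧ (∀ x, ∃ i, x ∈ U i) ∧
      ∀ i, ∀ x ∈ U i, ∀ y ∈ U i, bowenMax T n x y < ε}.Nonempty := by
    set V : 𝒳 → Set 𝒳 := fun x => ⋂ k ∈ Finset.range n,
      {y | dist (T^[k] x) (T^[k] y) < ε/2} with hV
    have hVopen : ∀ x, IsOpen (V x) :=
      fun x => isOpen_biInter_finset fun k _ =>
        isOpen_lt (continuous_const.dist ((hT.iterate k))) continuous_const
    have hVmem : ∀ x, x ∈ V x := by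
      intro x
      simp only [hV, Set.mem_iInter, Set.mem_setOf_eq]
      intro k _
      simpa using half_pos hε
    obtain ⟨t, ht⟩ := isCompact_univ.elim_finite_subcover V hVopen
      (fun x _ => Set.mem_iUnion.2 ⟨x, hVmem x⟩)
    refine ⟨t.card, fun i => V (t.equivFin.symm i), fun i => hVopen _, ?_, ?_⟩
    · intro x
      obtain ⟨x₀, hx₀, hx⟩ := Set.mem_iUnion₂.1 (ht (Set.mem_univ x))
      refine ⟨t.equivFin ⟨x₀, hx₀⟩, ?_⟩
      simpa using hx
    · intro i x hx y hy
      apply bowenMax_lt_of_forall T hε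
      intro k hk
      simp only [hV, Set.mem_iInter, Set.mem_setOf_eq] at hx hy
      have h1 := hx k (Finset.mem_range.2 hk)
      have h2 := hy k (Finset.mem_range.2 hk)
      calc dist (T^[k] x) (T^[k] y)
          ≤ dist (T^[k] x) (T^[k] ((t.equivFin.symm i) : 𝒳))
            + dist (T^[k] ((t.equivFin.symm i) : 𝒳)) (T^[k] y) := dist_triangle _ _ _
        _ < ε/2 + ε/2 := by rw [dist_comm (T^[k] x)]; exact add_lt_add h1 h2
        _ = ε := add_halves ε
  exact Nat.sInf_mem hne

/-- `R̃_μ(ε) ≤ S(𝒳,T,d,ε)` where `S(𝒳,T,d,ε) = lim (1/n) log #(𝒳, d_n, ε)`. -/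
theorem rateDistortionLinfty_le_S {𝒳 : Type*} [MetricSpace 𝒳] [CompactSpace 𝒳]
    [MeasurableSpace 𝒳] [BorelSpace 𝒳] (T : 𝒳 → 𝒳) (hT : Continuous T)
    (μ : Measure 𝒳) [IsProbabilityMeasure μ] (hinv : Measure.map T μ = μ)
    (ε : ℝ) (hε : 0 < ε) (S : ℝ)
    (hS : Tendsto (fun n : ℕ => Real.log (coverNum 𝒳 (bowenMax T n) ε) / n)
      atTop (𝓝 S)) :
    rateDistortionLinftyLim 𝒳 T μ ε ≤ ENNReal.ofReal S := by
  classical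
  have hXne : Nonempty 𝒳 := by
    by_contra h
    rw [not_nonempty_iff] at h
    have h1 : μ Set.univ = 1 := measure_univ
    rw [Set.univ_eq_empty_iff.2 h, measure_empty] at h1
    exact zero_ne_one h1
  obtain ⟨x₀⟩ := hXne
  obtain ⟨e, he⟩ := MeasureTheory.exists_measurableEmbedding_real 𝒳
  -- main bound for each n ≥ 1 and α > 0
  have hmain : ∀ α : ℝ, 0 < α → ∀ n : ℕ, 1 ≤ n →
      rateDistortionLinfty 𝒳 T μ ε α ≤
        ENNReal.ofReal (Real.log (coverNum 𝒳 (bowenMax T n) ε) / n) := by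
    intro α hα n hn
    have hn' : 0 < n := hn
    set N := coverNum 𝒳 (bowenMax T n) ε with hNdef
    obtain ⟨U, hUopen, hUcover, hUdiam⟩ := coverNum_spec T hT n hε
    have hN1 : 1 ≤ N := by
      rcases Nat.eq_zero_or_pos N with h0 | h
      · obtain ⟨i, -⟩ := hUcover x₀
        have := i.isLt
        omega
      · exact h
    -- index of a cover element containing x
    have hfilt : ∀ x : 𝒳, (Finset.univ.filter fun i => x ∈ U i).Nonempty := fun x => by
      obtain ⟨i, hi⟩ := hUcover x
      exact ⟨i, Finset.mem_filter.2 ⟨Finset.mem_univ i, hi⟩⟩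
    set fidx : 𝒳 → Fin N := fun x => (Finset.univ.filter fun i => x ∈ U i).min' (hfilt x)
      with hfidxdef
    have hfidx_mem : ∀ x, x ∈ U (fidx x) := fun x =>
      (Finset.mem_filter.1 (Finset.min'_mem _ (hfilt x))).2
    have hfidx_meas : Measurable fidx := by
      apply measurable_to_countable'
      intro i
      have hset : fidx ⁻¹' {i} = U i ∩ ⋂ j : Fin N, {x | x ∈ U j → i ≤ j} := by
        ext x
        simp only [Set.mem_preimage, Set.mem_singleton_iff, Set.mem_inter_iff, Set.mem_iInter,
          Set.mem_setOf_eq]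
        constructor
        · rintro rfl
          exact ⟨hfidx_mem x, fun j hj =>
            Finset.min'_le _ _ (Finset.mem_filter.2 ⟨Finset.mem_univ j, hj⟩)⟩
        · rintro ⟨h1, h2⟩
          refine le_antisymm ?_ ?_
          · exact Finset.min'_le _ _ (Finset.mem_filter.2 ⟨Finset.mem_univ i, h1⟩)
          · exact Finset.le_min' _ _ _ fun j hj => h2 j (Finset.mem_filter.1 hj).2
      rw [hset]
      refine ((hUopen i).measurableSet).inter (MeasurableSet.iInter fun j => ?_)
      by_cases hij : i ≤ j
      · have : {x : 𝒳 | x ∈ U j → i ≤ j} = Set.univ := Set.eq_univ_of_forall fun x _ => hij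
        rw [this]
        exact MeasurableSet.univ
      · have : {x : 𝒳 | x ∈ U j → i ≤ j} = (U j)ᶜ := by
          ext x
          simp [hij]
        rw [this]
        exact (hUopen j).measurableSet.compl
    -- representative points
    set c : Fin N → 𝒳 := fun i => if h : (U i).Nonempty then h.choose else x₀ with hcdef
    have hcU : ∀ x, c (fidx x) ∈ U (fidx x) := fun x => by
      have hne : (U (fidx x)).Nonempty := ⟨x, hfidx_mem x⟩
      simp only [hcdef, dif_pos hne]
      exact hne.choose_spec
    -- probability space and random variables
    letI mΩ : MeasureSpace ℝ := ⟨μ.map e⟩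
    haveI hprob : IsProbabilityMeasure (ℙ : Measure ℝ) :=
      Measure.isProbabilityMeasure_map he.measurable.aemeasurable
    set X : ℝ → 𝒳 := Function.extend e id fun _ => x₀ with hXdef
    have hXmeas : Measurable X := he.measurable_extend measurable_id measurable_const
    have hmap : Measure.map X (ℙ : Measure ℝ) = μ := by
      show Measure.map X (μ.map e) = μ
      rw [Measure.map_map hXmeas he.measurable]
      have hcomp : X ∘ e = id := by
        funext x
        simp only [Function.comp_apply, hXdef, id_eq]
        exact he.injective.extend_apply _ _ _
      rw [hcomp, Measure.map_id]
    set Y : ℝ → Fin n → 𝒳 := fun ω k => T^[(k : ℕ)] (c (fidx (X ω))) with hYdef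
    have hYmeas : Measurable Y := measurable_pi_lambda _ fun k =>
      ((hT.iterate (k : ℕ)).measurable).comp
        ((Measurable.of_discrete (f := c)).comp (hfidx_meas.comp hXmeas))
    -- zero distortion
    have hdist : (∫ ω, ((Finset.univ.filter fun k : Fin n =>
        ε ≤ dist (T^[(k : ℕ)] (X ω)) (Y ω k)).card : ℝ) ∂(ℙ : Measure ℝ)) < α * n := by
      have hzero : ∀ ω : ℝ, (Finset.univ.filter fun k : Fin n =>
          ε ≤ dist (T^[(k : ℕ)] (X ω)) (Y ω k)) = ∅ := by
        intro ω
        refine Finset.filter_eq_empty_iff.2 fun k _ => ?_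
        rw [not_le]
        have h3 : bowenMax T n (X ω) (c (fidx (X ω))) < ε :=
          hUdiam _ _ (hfidx_mem _) _ (hcU (X ω))
        calc dist (T^[(k : ℕ)] (X ω)) (Y ω k)
            ≤ bowenMax T n (X ω) (c (fidx (X ω))) := dist_le_bowenMax T k.isLt _ _
          _ < ε := h3
      have heq : (fun ω : ℝ => ((Finset.univ.filter fun k : Fin n =>
          ε ≤ dist (T^[(k : ℕ)] (X ω)) (Y ω k)).card : ℝ)) = fun _ => (0 : ℝ) := by
        funext ω
        rw [hzero ω]
        simp
      rw [heq, integral_zero]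
      have : (0:ℝ) < (n:ℝ) := by exact_mod_cast hn'
      positivity
    -- mutual information bound
    have hmi : mutualInformation X Y ≤ ENNReal.ofReal (Real.log N) := by
      refine iSup_le fun M => iSup_le fun N' => iSup_le fun f => iSup_le fun g =>
        iSup_le fun hf => iSup_le fun hg => ?_
      apply ENNReal.ofReal_le_ofReal
      exact mi_sum_le_log (A := fun ω => f (X ω)) (B := fun ω => g (Y ω))
        (hf.comp hXmeas) (hg.comp hYmeas) hN1
        (Finset.univ.image fun i : Fin N => g fun k : Fin n => T^[(k : ℕ)] (c i))
        (fun ω => Finset.mem_image.2 ⟨fidx (X ω), Finset.mem_univ _, rfl⟩)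
        (le_trans Finset.card_image_le (by simp))
    refine le_trans (sInf_le ⟨n, hn', ℝ, mΩ, hprob, X, Y, hXmeas, hYmeas, hmap, hdist, rfl⟩) ?_
    have hpos : (0:ℝ) < (n:ℝ) := by exact_mod_cast hn'
    calc mutualInformation X Y / (n : ℝ≥0∞)
        ≤ ENNReal.ofReal (Real.log N) / (n : ℝ≥0∞) := ENNReal.div_le_div_right hmi _
      _ = ENNReal.ofReal (Real.log N / n) := by
          rw [ENNReal.ofReal_div_of_pos hpos, ENNReal.ofReal_natCast]
  refine iSup_le fun α => iSup_le fun hα => ?_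
  have h2 : Tendsto (fun n : ℕ => ENNReal.ofReal (Real.log (coverNum 𝒳 (bowenMax T n) ε) / n))
      atTop (𝓝 (ENNReal.ofReal S)) := (ENNReal.continuous_ofReal.tendsto S).comp hS
  exact ge_of_tendsto h2 (eventually_atTop.2 ⟨1, hmain α hα⟩)
end
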